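/- With the analysis filter kernels H̄_LP = (1/2)(I_N + Ψ) and H̄_HP = I_N - H̄_LP, the combined analysis-sampling operator satisfies S̄_uLP S̄_dLP H̄_LP + S̄_uHP S̄_dHP H̄_HP = I_N + J_N Ψ. -/

import Mathlib

/-
Both Gram matrices `SᵀS` equal `I ± J_N`: the off-diagonal blocks of `[I  ±J]ᵀ[I  ±J]` are `±J_{N/2}`,
the diagonal ones are `I` because `J_{N/2}` is a symmetric involution, and `J_N` is exactly the block
anti-diagonal matrix with blocks `J_{N/2}`. What remains is the ring identity
`(I + J)·½(I + Ψ) + (I - J)·½(I - Ψ) = I + JΨ`.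
-/

open Matrix

/-- The `n × n` exchange (counter-identity) matrix, with ones on the anti-diagonal. -/
noncomputable def exchMat (n : ℕ) : Matrix (Fin n) (Fin n) ℝ :=
  Matrix.of fun i j => if (i : ℕ) + (j : ℕ) = n - 1 then (1 : ℝ) else 0

/-- The low-pass downsampling matrix `S̄_dLP = [I_{N/2}  J_{N/2}]`, an `(N/2) × N` block
matrix (columns reindexed from `Fin (N/2) ⊕ Fin (N/2)` to `Fin N`). -/
noncomputable def SdLP (N : ℕ) (h : N / 2 + N / 2 = N) :
    Matrix (Fin (N / 2)) (Fin N) ℝ :=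
  (Matrix.fromCols (1 : Matrix (Fin (N / 2)) (Fin (N / 2)) ℝ)
    (exchMat (N / 2))).submatrix id (finSumFinEquiv.trans (finCongr h)).symm

/-- The high-pass downsampling matrix `S̄_dHP = [I_{N/2}  -J_{N/2}]`. -/
noncomputable def SdHP (N : ℕ) (h : N / 2 + N / 2 = N) :
    Matrix (Fin (N / 2)) (Fin N) ℝ :=
  (Matrix.fromCols (1 : Matrix (Fin (N / 2)) (Fin (N / 2)) ℝ)
    (-exchMat (N / 2))).submatrix id (finSumFinEquiv.trans (finCongr h)).symm

theorem exchMat_eq_permMatrix_revPerm (n : ℕ) : exchMat n = Fin.revPerm.permMatrix ℝ := by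
  ext i j
  simp only [exchMat, of_apply, PEquiv.toMatrix_apply, Equiv.toPEquiv_apply, Option.mem_some_iff,
    Fin.revPerm_apply, Fin.ext_iff, Fin.val_rev]
  grind

theorem exchMat_transpose (n : ℕ) : (exchMat n)ᵀ = exchMat n := by
  rw [exchMat_eq_permMatrix_revPerm, transpose_permMatrix]
  rfl

theorem exchMat_mul_self (n : ℕ) : exchMat n * exchMat n = 1 := by
  rw [exchMat_eq_permMatrix_revPerm, ← permMatrix_mul]
  convert permMatrix_one
  exact Equiv.ext Fin.rev_rev

theorem exchMat_add_self (m : ℕ) :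
    exchMat (m + m) = (fromBlocks 0 (exchMat m) (exchMat m) 0).submatrix
      finSumFinEquiv.symm finSumFinEquiv.symm := by
  ext i j
  obtain ⟨a | a, rfl⟩ := finSumFinEquiv.surjective i <;>
    obtain ⟨b | b, rfl⟩ := finSumFinEquiv.surjective j <;>
    rw [submatrix_apply, Equiv.symm_apply_apply, Equiv.symm_apply_apply] <;>
    simp only [fromBlocks_apply₁₁, fromBlocks_apply₁₂, fromBlocks_apply₂₁, fromBlocks_apply₂₂,
      exchMat, of_apply, Matrix.zero_apply, finSumFinEquiv_apply_left, finSumFinEquiv_apply_right,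
      Fin.val_castAdd, Fin.val_natAdd] <;>
    grind

theorem transpose_mul_self_submatrix_fromCols_one_smul_exchMat {m n : ℕ} (h : m + m = n)
    (c : ℝ) (hc : c * c = 1) :
    let S := (fromCols (1 : Matrix (Fin m) (Fin m) ℝ) (c • exchMat m)).submatrix id
      (finSumFinEquiv.trans (finCongr h)).symm
    Sᵀ * S = 1 + c • exchMat n := by
  subst h
  simp only [finCongr_refl, Equiv.trans_refl, transpose_submatrix]
  rw [← submatrix_mul _ _ _ _ _ Function.bijective_id, transpose_fromCols,
    fromRows_mul_fromCols, exchMat_add_self]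
  simp only [transpose_one, transpose_smul, exchMat_transpose, Matrix.one_mul, Matrix.mul_one,
    smul_mul_smul, exchMat_mul_self, hc, one_smul]
  have hblocks : fromBlocks 1 (c • exchMat m) (c • exchMat m) 1 =
      1 + c • fromBlocks 0 (exchMat m) (exchMat m) 0 := by
    rw [← fromBlocks_one, fromBlocks_smul, fromBlocks_add]
    simp
  rw [hblocks, ← submatrix_one_equiv finSumFinEquiv.symm]
  rfl

theorem SdLP_transpose_mul_self (N : ℕ) (h : N / 2 + N / 2 = N) :
    (SdLP N h)ᵀ * SdLP N h = 1 + exchMat N := by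
  simpa only [SdLP, one_smul] using
    transpose_mul_self_submatrix_fromCols_one_smul_exchMat h 1 (one_mul 1)

theorem SdHP_transpose_mul_self (N : ℕ) (h : N / 2 + N / 2 = N) :
    (SdHP N h)ᵀ * SdHP N h = 1 - exchMat N := by
  simpa only [SdHP, neg_one_smul, ← sub_eq_add_neg] using
    transpose_mul_self_submatrix_fromCols_one_smul_exchMat h (-1) (by norm_num)

theorem one_add_mul_half_smul_add_one_sub_mul_sub_half_smul {A : Type*} [Ring A] [Algebra ℝ A]
    (J D : A) :
    (1 + J) * ((1 / 2 : ℝ) • (1 + D)) + (1 - J) * (1 - (1 / 2 : ℝ) • (1 + D)) = 1 + J * D := by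
  simp only [mul_add, add_mul, mul_sub, sub_mul, mul_smul_comm, one_mul, mul_one]
  module

theorem stmt10_general (N : ℕ) (h : N / 2 + N / 2 = N)
    (ψ : Fin N → ℝ) :
    (SdLP N h)ᵀ * SdLP N h *
        ((1 / 2 : ℝ) • ((1 : Matrix (Fin N) (Fin N) ℝ) + Matrix.diagonal ψ)) +
      (SdHP N h)ᵀ * SdHP N h *
        ((1 : Matrix (Fin N) (Fin N) ℝ) -
          (1 / 2 : ℝ) • ((1 : Matrix (Fin N) (Fin N) ℝ) + Matrix.diagonal ψ)) =
      (1 : Matrix (Fin N) (Fin N) ℝ) + exchMat N * Matrix.diagonal ψ := by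
  rw [SdLP_transpose_mul_self, SdHP_transpose_mul_self]
  exact one_add_mul_half_smul_add_one_sub_mul_sub_half_smul _ _

/-- With `H̄_LP = (1/2)(I_N + Ψ)` and `H̄_HP = I_N - H̄_LP`, the combined
analysis-sampling operator satisfies
`S̄_uLP S̄_dLP H̄_LP + S̄_uHP S̄_dHP H̄_HP = I_N + J_N Ψ`. -/
theorem stmt10 (N : ℕ) (hN : 0 < N) (hNe : Even N) (h : N / 2 + N / 2 = N)
    (ψ : Fin N → ℝ) :
    (SdLP N h)ᵀ * SdLP N h *
        ((1 / 2 : ℝ) • ((1 : Matrix (Fin N) (Fin N) ℝ) + Matrix.diagonal ψ)) +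
      (SdHP N h)ᵀ * SdHP N h *
        ((1 : Matrix (Fin N) (Fin N) ℝ) -
          (1 / 2 : ℝ) • ((1 : Matrix (Fin N) (Fin N) ℝ) + Matrix.diagonal ψ)) =
      (1 : Matrix (Fin N) (Fin N) ℝ) + exchMat N * Matrix.diagonal ψ :=
  stmt10_general N h ψ
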